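/- Let σ(z) = max(z,0) be the ReLU activation and, for x ∈ [0,1]^d, write x̃ = (xᵀ,1)ᵀ ∈ ℝ^{d+1}. There exists an absolute constant C (independent of d, m, f and P) such that the following holds. Let P be any probability measure on [0,1]^d and let f : [0,1]^d → ℝ satisfy f(x) = ∫ a σ(wᵀ x̃) dρ(a,w) for a probability measure ρ on ℝ × ℝ^{d+1} with B := ∫ |a| ‖w‖₁ dρ(a,w) < ∞. Then for every m ∈ ℕ there exist (a₁,w₁), …, (a_m,w_m) ∈ ℝ × ℝ^{d+1} such that ‖ f − (1/m) Σ_{j=1}^m a_j σ(w_jᵀ ·̃) ‖_{L²(P)} ≤ C B / √m. -/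

import Mathlib

/-!
Maurey's empirical method. Reweighting `ρ` by the path norm `|a| ‖w‖₁` and rescaling every
neuron to path norm `B = ∫ |a| ‖w‖₁ dρ` writes `f` on the cube as the mean of a random neuron
bounded by `B`. Neurons are then chosen one at a time: averaging the squared `L²(P)` error of
`∑ⱼ (f - neuronⱼ)` over the law of the next neuron kills the cross term and adds only a variance
`≤ B²`, so some choice keeps the error of the sum `≤ k B²`; dividing by `m²` gives `B² / m`.
-/

open MeasureTheory

/-- `x̃ = (xᵀ, 1)ᵀ ∈ ℝ^{d+1}` for `x ∈ ℝ^d`. -/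
def tilde {d : ℕ} (x : Fin d → ℝ) : Fin (d + 1) → ℝ := Fin.snoc x 1

open ProbabilityTheory Function Set

section Maurey

variable {Q : Type*} [MeasurableSpace Q] {μ : Measure Q} [IsProbabilityMeasure μ] {B : ℝ}

lemma integral_sq_add_integral_sub_eq_sq_add_variance {Y : Q → ℝ} (hY : MemLp Y 2 μ) (e : ℝ) :
    ∫ q, (e + (μ[Y] - Y q)) ^ 2 ∂μ = e ^ 2 + Var[Y; μ] := by
  have hZ : MemLp (fun q => (e + μ[Y]) - Y q) 2 μ := (memLp_const _).sub hY
  have hmean : μ[fun q => (e + μ[Y]) - Y q] = e := by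
    rw [integral_sub (integrable_const _) (hY.integrable one_le_two)]
    simp
  have hvar := variance_eq_sub hZ
  rw [variance_const_sub hY.aestronglyMeasurable, hmean] at hvar
  simp only [Pi.pow_apply] at hvar
  simp_rw [← add_sub_assoc]
  linarith

lemma abs_integral_sub_le {Y : Q → ℝ} (hY : ∀ q, |Y q| ≤ B) (q : Q) :
    |∫ q', Y q' ∂μ - Y q| ≤ B + B := by
  have hmean : |∫ q', Y q' ∂μ| ≤ B := by
    simpa using norm_integral_le_of_norm_le_const (μ := μ) (f := Y) (ae_of_all _ hY)
  exact (abs_sub _ _).trans (add_le_add hmean (hY q))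

variable {X : Type*} [MeasurableSpace X] {P : Measure X} [IsProbabilityMeasure P]
  {g : Q → X → ℝ}

lemma measurable_integral_left (hg : Measurable (uncurry g)) :
    Measurable fun x => ∫ q, g q x ∂μ :=
  hg.stronglyMeasurable.integral_prod_left.measurable

lemma memLp_integral_sub (hg : Measurable (uncurry g)) (hgB : ∀ q x, |g q x| ≤ B) (q : Q) :
    MemLp (fun x => ∫ q', g q' x ∂μ - g q x) 2 P :=
  MemLp.of_bound
    ((measurable_integral_left hg).sub (hg.comp measurable_prodMk_left)).aestronglyMeasurable
    (B + B) (ae_of_all _ fun x => abs_integral_sub_le (hgB · x) q)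

lemma exists_integral_sq_add_integral_sub_le (hg : Measurable (uncurry g))
    (hgB : ∀ q x, |g q x| ≤ B) {E : X → ℝ} (hE : MemLp E 2 P) :
    ∃ q, ∫ x, (E x + (∫ q', g q' x ∂μ - g q x)) ^ 2 ∂P ≤ ∫ x, E x ^ 2 ∂P + B ^ 2 := by
  set G : Q → X → ℝ := fun q x => (E x + (∫ q', g q' x ∂μ - g q x)) ^ 2
  have hdev : MemLp (fun z : Q × X => ∫ q', g q' z.2 ∂μ - g z.1 z.2) 2 (μ.prod P) :=
    MemLp.of_bound
      (((measurable_integral_left hg).comp measurable_snd).sub hg).aestronglyMeasurable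
      (B + B) (ae_of_all _ fun z => abs_integral_sub_le (hgB · z.2) z.1)
  have hG : Integrable (uncurry G) (μ.prod P) := ((hE.comp_snd μ).add hdev).integrable_sq
  have hinner : ∀ x, ∫ q, G q x ∂μ ≤ E x ^ 2 + B ^ 2 := fun x => by
    have hgx : Measurable fun q => g q x := hg.comp measurable_prodMk_right
    have hvar : Var[fun q => g q x; μ] ≤ ((B - -B) / 2) ^ 2 :=
      variance_le_sq_of_bounded (ae_of_all μ fun q => abs_le.mp (hgB q x)) hgx.aemeasurable
    have hL2 : MemLp (fun q => g q x) 2 μ :=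
      MemLp.of_bound hgx.aestronglyMeasurable B (ae_of_all _ fun q => hgB q x)
    rw [integral_sq_add_integral_sub_eq_sq_add_variance hL2 (E x)]
    linarith [show ((B - -B) / 2) ^ 2 = B ^ 2 by ring]
  obtain ⟨q, hq⟩ := exists_le_integral hG.integral_prod_left
  refine ⟨q, hq.trans ?_⟩
  calc ∫ q, ∫ x, G q x ∂P ∂μ = ∫ x, ∫ q, G q x ∂μ ∂P := integral_integral_swap hG
    _ ≤ ∫ x, (E x ^ 2 + B ^ 2) ∂P :=
      integral_mono hG.integral_prod_right (hE.integrable_sq.add (integrable_const _)) hinner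
    _ = ∫ x, E x ^ 2 ∂P + B ^ 2 := by
      rw [integral_add hE.integrable_sq (integrable_const _), integral_const]
      simp

theorem exists_integral_sq_sum_integral_sub_le (hg : Measurable (uncurry g))
    (hgB : ∀ q x, |g q x| ≤ B) (k : ℕ) :
    ∃ q : Fin k → Q, ∫ x, (∑ j, (∫ q', g q' x ∂μ - g (q j) x)) ^ 2 ∂P ≤ k * B ^ 2 := by
  induction k with
  | zero => exact ⟨Fin.elim0, by simp⟩
  | succ k ih =>
    obtain ⟨q, hq⟩ := ih
    obtain ⟨q', hq'⟩ := exists_integral_sq_add_integral_sub_le (P := P) (μ := μ) hg hgB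
      (memLp_finsetSum _ fun j _ => memLp_integral_sub (P := P) (μ := μ) hg hgB (q j))
    refine ⟨Fin.snoc q q', ?_⟩
    simp only [Fin.sum_univ_castSucc, Fin.snoc_castSucc, Fin.snoc_last]
    push_cast
    linarith

theorem exists_integral_sq_integral_sub_average_le (hg : Measurable (uncurry g))
    (hgB : ∀ q x, |g q x| ≤ B) {m : ℕ} (hm : 0 < m) :
    ∃ q : Fin m → Q,
      ∫ x, (∫ q', g q' x ∂μ - (1 / m : ℝ) * ∑ j, g (q j) x) ^ 2 ∂P ≤ B ^ 2 / m := by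
  obtain ⟨q, hq⟩ := exists_integral_sq_sum_integral_sub_le (P := P) (μ := μ) hg hgB m
  refine ⟨q, ?_⟩
  have hm' : (m : ℝ) ≠ 0 := by positivity
  have hscale : ∀ x, (∫ q', g q' x ∂μ - (1 / m : ℝ) * ∑ j, g (q j) x) ^ 2
      = (1 / m : ℝ) ^ 2 * (∑ j, (∫ q', g q' x ∂μ - g (q j) x)) ^ 2 := fun x => by
    rw [Finset.sum_sub_distrib, Finset.sum_const, Finset.card_univ, Fintype.card_fin,
      nsmul_eq_mul]
    field_simp
  simp_rw [hscale, integral_const_mul]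
  calc (1 / m : ℝ) ^ 2 * ∫ x, (∑ j, (∫ q', g q' x ∂μ - g (q j) x)) ^ 2 ∂P
      ≤ (1 / m : ℝ) ^ 2 * (m * B ^ 2) := by gcongr
    _ = B ^ 2 / m := by field_simp

end Maurey

lemma isProbabilityMeasure_withDensity_div_integral {α : Type*} [MeasurableSpace α]
    {ρ : Measure α} {N : α → ℝ} (hN : 0 ≤ N) (hNi : Integrable N ρ) (h0 : ∫ a, N a ∂ρ ≠ 0) :
    IsProbabilityMeasure (ρ.withDensity fun a => ENNReal.ofReal (N a / ∫ b, N b ∂ρ)) := by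
  constructor
  rw [withDensity_apply _ MeasurableSet.univ, setLIntegral_univ,
    ← ofReal_integral_eq_lintegral_ofReal (hNi.div_const _)
      (ae_of_all _ fun a => div_nonneg (hN a) (integral_nonneg hN)),
    integral_div, div_self h0, ENNReal.ofReal_one]

lemma integral_withDensity_ofReal {α : Type*} [MeasurableSpace α] {ρ : Measure α}
    {N : α → ℝ} (hN : Measurable N) (hN0 : 0 ≤ N) (h : α → ℝ) :
    ∫ a, h a ∂ρ.withDensity (fun a => ENNReal.ofReal (N a)) = ∫ a, N a * h a ∂ρ := by
  rw [integral_withDensity_eq_integral_toReal_smul hN.ennreal_ofReal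
    (ae_of_all _ fun _ => ENNReal.ofReal_lt_top)]
  simp_rw [ENNReal.toReal_ofReal (hN0 _), smul_eq_mul]

lemma max_sum_mul_le_sum_abs {n : ℕ} {v : Fin n → ℝ} (hv : v ∈ Icc 0 1) (w : Fin n → ℝ) :
    max (∑ i, w i * v i) 0 ≤ ∑ i, |w i| := by
  refine max_le (Finset.sum_le_sum fun i _ => ?_) (by positivity)
  calc w i * v i ≤ |w i| * |v i| := (le_abs_self _).trans (abs_mul _ _).le
    _ ≤ |w i| * 1 := by
      gcongr
      exact abs_le.2 ⟨by linarith [show 0 ≤ v i from hv.1 i], hv.2 i⟩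
    _ = |w i| := mul_one _

section Barron

variable {d : ℕ}

lemma tilde_mem_Icc {x : Fin d → ℝ} (hx : x ∈ Icc 0 1) : tilde x ∈ Icc 0 1 := by
  obtain ⟨h0, h1⟩ := hx
  constructor <;> intro i <;> induction i using Fin.lastCases <;> simp [tilde]
  exacts [h0 _, h1 _]

noncomputable def neuron (p : ℝ × (Fin (d + 1) → ℝ)) (x : Fin d → ℝ) : ℝ :=
  p.1 * max (∑ i, p.2 i * tilde x i) 0

noncomputable def pathNorm (p : ℝ × (Fin (d + 1) → ℝ)) : ℝ := |p.1| * ∑ i, |p.2 i|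

/-- Path norm `B`, except that `B / 0 = 0` sends a neuron of path norm `0` to outer weight `0`. -/
noncomputable def scaleToPathNorm (B : ℝ) (p : ℝ × (Fin (d + 1) → ℝ)) : ℝ × (Fin (d + 1) → ℝ) :=
  (B / pathNorm p * p.1, p.2)

lemma pathNorm_nonneg (p : ℝ × (Fin (d + 1) → ℝ)) : 0 ≤ pathNorm p := by
  unfold pathNorm; positivity

lemma continuous_pathNorm : Continuous (pathNorm (d := d)) := by
  unfold pathNorm; fun_prop

lemma continuous_neuron : Continuous (uncurry (neuron (d := d))) := by
  unfold neuron tilde; fun_prop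

lemma measurable_scaleToPathNorm (B : ℝ) : Measurable (scaleToPathNorm (d := d) B) := by
  unfold scaleToPathNorm
  have := continuous_pathNorm (d := d).measurable
  fun_prop

lemma abs_neuron_le_pathNorm {x : Fin d → ℝ} (hx : x ∈ Icc 0 1) (p : ℝ × (Fin (d + 1) → ℝ)) :
    |neuron p x| ≤ pathNorm p := by
  rw [neuron, pathNorm, abs_mul, abs_of_nonneg (le_max_right (∑ i, p.2 i * tilde x i) 0)]
  exact mul_le_mul_of_nonneg_left (max_sum_mul_le_sum_abs (tilde_mem_Icc hx) p.2) (abs_nonneg _)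

lemma neuron_scaleToPathNorm (B : ℝ) (p : ℝ × (Fin (d + 1) → ℝ)) (x : Fin d → ℝ) :
    neuron (scaleToPathNorm B p) x = B / pathNorm p * neuron p x := by
  simp only [neuron, scaleToPathNorm, mul_assoc]

lemma pathNorm_scaleToPathNorm_le {B : ℝ} (hB : 0 ≤ B) (p : ℝ × (Fin (d + 1) → ℝ)) :
    pathNorm (scaleToPathNorm B p) ≤ B := by
  have hN : pathNorm (scaleToPathNorm B p) = B / pathNorm p * pathNorm p := by
    change |B / pathNorm p * p.1| * ∑ i, |p.2 i| = _
    rw [abs_mul, abs_of_nonneg (div_nonneg hB (pathNorm_nonneg p)), mul_assoc, pathNorm]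
  rcases (pathNorm_nonneg p).eq_or_lt with h | h
  · rw [hN, ← h, mul_zero]; exact hB
  · rw [hN, div_mul_cancel₀ _ h.ne']

lemma abs_neuron_scaleToPathNorm_le {B : ℝ} (hB : 0 ≤ B) {x : Fin d → ℝ} (hx : x ∈ Icc 0 1)
    (p : ℝ × (Fin (d + 1) → ℝ)) : |neuron (scaleToPathNorm B p) x| ≤ B :=
  (abs_neuron_le_pathNorm hx _).trans (pathNorm_scaleToPathNorm_le hB p)

/-- Importance sampling: for `B > 0`, `μ` is `ρ` with density `pathNorm / B`. -/
lemma exists_isProbabilityMeasure_integral_neuron_scaleToPathNorm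
    {ρ : Measure (ℝ × (Fin (d + 1) → ℝ))} [IsProbabilityMeasure ρ] (hρ : Integrable pathNorm ρ) :
    ∃ μ : Measure (ℝ × (Fin (d + 1) → ℝ)), IsProbabilityMeasure μ ∧
      ∀ x ∈ Icc (0 : Fin d → ℝ) 1,
        ∫ q, neuron (scaleToPathNorm (∫ p, pathNorm p ∂ρ) q) x ∂μ = ∫ p, neuron p x ∂ρ := by
  set B := ∫ p, pathNorm p ∂ρ
  obtain hB | hB : 0 = B ∨ 0 < B := (integral_nonneg pathNorm_nonneg).eq_or_lt
  · have hN : pathNorm =ᵐ[ρ] 0 := (integral_eq_zero_iff_of_nonneg pathNorm_nonneg hρ).1 hB.symm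
    refine ⟨ρ, ‹_›, fun x hx => ?_⟩
    rw [← hB]
    simp only [neuron_scaleToPathNorm, zero_div, zero_mul, integral_zero]
    refine (integral_eq_zero_of_ae ?_).symm
    filter_upwards [hN] with p hp
    exact abs_nonpos_iff.1 ((abs_neuron_le_pathNorm hx p).trans hp.le)
  · refine ⟨_, isProbabilityMeasure_withDensity_div_integral pathNorm_nonneg hρ hB.ne',
      fun x hx => ?_⟩
    rw [integral_withDensity_ofReal (continuous_pathNorm.measurable.div_const _)
      (fun p => div_nonneg (pathNorm_nonneg p) hB.le)]
    refine integral_congr_ae (ae_of_all _ fun p => ?_)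
    change pathNorm p / B * neuron (scaleToPathNorm B p) x = neuron p x
    rw [neuron_scaleToPathNorm]
    rcases (pathNorm_nonneg p).eq_or_lt with h | h
    · have : neuron p x = 0 := abs_nonpos_iff.1 (h ▸ abs_neuron_le_pathNorm hx p)
      simp [this]
    · field_simp [hB.ne']

/-- Outside the cube a rescaled neuron is unbounded; `P` does not see the cut-off. -/
noncomputable def cubeNeuron (B : ℝ) (q : ℝ × (Fin (d + 1) → ℝ)) : (Fin d → ℝ) → ℝ :=
  (Icc 0 1).indicator (neuron (scaleToPathNorm B q))

lemma measurable_cubeNeuron (B : ℝ) : Measurable (uncurry (cubeNeuron (d := d) B)) :=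
  (continuous_neuron.measurable.comp
    ((measurable_scaleToPathNorm B).prodMap measurable_id)).indicator
    (measurable_snd measurableSet_Icc)

lemma abs_cubeNeuron_le {B : ℝ} (hB : 0 ≤ B) (q : ℝ × (Fin (d + 1) → ℝ)) (x : Fin d → ℝ) :
    |cubeNeuron B q x| ≤ B := by
  by_cases hx : x ∈ Icc 0 1
  · simpa [cubeNeuron, hx] using abs_neuron_scaleToPathNorm_le hB hx q
  · simpa [cubeNeuron, hx] using hB

end Barron

/-- Direct approximation theorem for Barron functions, `L²` version: there is an absolute
constant `C` such that for every probability measure `P` on `[0,1]^d`, every Barron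
function `f` with representing measure `ρ` and `B = ∫ |a|‖w‖₁ dρ`, and every `m ≥ 1`,
there is a two-layer ReLU network of width `m` with
`‖f - f_m‖_{L²(P)} ≤ C B / √m`. -/
theorem barron_direct_approximation_L2 :
    ∃ C : ℝ, 0 < C ∧
      ∀ (d : ℕ) (P : Measure (Fin d → ℝ)) [IsProbabilityMeasure P],
        P (Set.Icc (0 : Fin d → ℝ) 1) = 1 →
        ∀ (f : (Fin d → ℝ) → ℝ) (ρ : Measure (ℝ × (Fin (d + 1) → ℝ)))
          [IsProbabilityMeasure ρ],
          (∀ x ∈ Set.Icc (0 : Fin d → ℝ) 1,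
            f x = ∫ p, p.1 * max (∑ i, p.2 i * tilde x i) 0 ∂ρ) →
          Integrable (fun p : ℝ × (Fin (d + 1) → ℝ) => |p.1| * ∑ i, |p.2 i|) ρ →
          ∀ m : ℕ, 0 < m →
            ∃ (a : Fin m → ℝ) (w : Fin m → (Fin (d + 1) → ℝ)),
              Real.sqrt (∫ x,
                  (f x - (1 / m : ℝ) * ∑ j, a j * max (∑ i, w j i * tilde x i) 0) ^ 2 ∂P)
                ≤ C * (∫ p, |p.1| * ∑ i, |p.2 i| ∂ρ) / Real.sqrt m := by
  refine ⟨1, one_pos, fun d P _ hP f ρ _ hf hρ m hm => ?_⟩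
  change Integrable pathNorm ρ at hρ
  obtain ⟨μ, _, hμ⟩ := exists_isProbabilityMeasure_integral_neuron_scaleToPathNorm hρ
  set B := ∫ p, pathNorm p ∂ρ
  have hB : 0 ≤ B := integral_nonneg pathNorm_nonneg
  obtain ⟨q, hq⟩ := exists_integral_sq_integral_sub_average_le (μ := μ) (P := P)
    (measurable_cubeNeuron B) (abs_cubeNeuron_le hB) hm
  refine ⟨fun j => (scaleToPathNorm B (q j)).1, fun j => (scaleToPathNorm B (q j)).2, ?_⟩
  change _ ≤ 1 * B / _
  have hcube : ∀ᵐ x ∂P, x ∈ Icc (0 : Fin d → ℝ) 1 :=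
    mem_ae_iff.2 ((prob_compl_eq_zero_iff measurableSet_Icc).2 hP)
  have hf_ae : ∀ᵐ x ∂P, (f x - (1 / m : ℝ) * ∑ j, neuron (scaleToPathNorm B (q j)) x) ^ 2
      = (∫ q', cubeNeuron B q' x ∂μ - (1 / m : ℝ) * ∑ j, cubeNeuron B (q j) x) ^ 2 := by
    filter_upwards [hcube] with x hx
    simp only [cubeNeuron, indicator_of_mem hx, hμ x hx, hf x hx]
    rfl
  calc _ = Real.sqrt (∫ x,
          (∫ q', cubeNeuron B q' x ∂μ - (1 / m : ℝ) * ∑ j, cubeNeuron B (q j) x) ^ 2 ∂P) :=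
        congrArg Real.sqrt (integral_congr_ae hf_ae)
    _ ≤ Real.sqrt (B ^ 2 / m) := Real.sqrt_le_sqrt hq
    _ = 1 * B / Real.sqrt m := by
      rw [Real.sqrt_div (sq_nonneg B), Real.sqrt_sq hB, one_mul]
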